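/- arXiv:2103.00758 — 2 statements merged into one kernel-verified Lean document; each statement's English description precedes it below -/
import Mathlib

section
/- Let n, t, P be positive integers with 2 ≤ t ≤ √n, n ≥ 4 and 6P ≤ n. With the block decomposition of length-n binary words into L = ⌊n/(3P)⌋ blocks (the first L-1 blocks of length 3P and the last of length 3P + s where n = 3LP + s, 0 ≤ s ≤ 3P-1), for every 1 ≤ l ≤ L-1 the number of patterns in T(l) satisfies #T(l) ≤ (36·P²·t²/n²)·#E_n(t). -/
/-- The three kinds of deletable errors: deletion, erasure, substitution (flip). -/
inductive ErrKind : Type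
  | D
  | E
  | F
  deriving DecidableEq

instance : Fintype ErrKind :=
  ⟨{ErrKind.D, ErrKind.E, ErrKind.F}, fun x => by cases x <;> simp⟩

/-- A binary word of length `n`. -/
abbrev Word (n : ℕ) := Fin n → Bool

/-- A deletable error pattern of length `n`: a pair `(e, v)`. -/
abbrev Pattern (n : ℕ) := (Fin n → Bool) × (Fin n → ErrKind)

/-- Process a list of (bit, error indicator, error kind) triples in order,
producing the corrupted string over `{0, 1, ε}` (`none` is the erasure symbol). -/
def corruptAux : List (Bool × Bool × ErrKind) → List (Option Bool)
  | [] => []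
  | (xi, false, _) :: rest => some xi :: corruptAux rest
  | (_, true, ErrKind.D) :: rest => corruptAux rest
  | (_, true, ErrKind.E) :: rest => none :: corruptAux rest
  | (xi, true, ErrKind.F) :: rest => some (!xi) :: corruptAux rest

/-- The corruption `F_g(x)` of the word `x` by the pattern `g`. -/
def corrupt {n : ℕ} (g : Pattern n) (x : Word n) : List (Option Bool) :=
  corruptAux (List.ofFn fun i => (x i, g.1 i, g.2 i))

/-- The corruption `F_g(x, t)` of the first `t` bits of `x` by the first `t` entries of `g`. -/
def corruptPrefix {n : ℕ} (g : Pattern n) (x : Word n) (t : ℕ) : List (Option Bool) :=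
  corruptAux ((List.ofFn fun i => (x i, g.1 i, g.2 i)).take t)

/-- The number of errors `Σ_i e_i` of a pattern. -/
def errCount {n : ℕ} (g : Pattern n) : ℕ :=
  (Finset.univ.filter fun i => g.1 i = true).card

/-- `E_n(r)`: the set of `n`-length deletable error patterns with at most `r` errors. -/
def Epat (n r : ℕ) : Finset (Pattern n) :=
  Finset.univ.filter fun g => errCount g ≤ r

/-- A pattern is `P`-far if any two distinct error positions are at distance at least `P`. -/
def IsPFar {n : ℕ} (P : ℕ) (g : Pattern n) : Prop :=
  ∀ i j : Fin n, i ≠ j → g.1 i = true → g.1 j = true →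
    (P : ℤ) ≤ |((i : ℕ) : ℤ) - ((j : ℕ) : ℤ)|

/-- The code `C` corrects all error patterns in `F`. -/
def CorrectsIn {n : ℕ} (C : Finset (Word n)) (F : Set (Pattern n)) : Prop :=
  ∀ x₁ ∈ C, ∀ x₂ ∈ C, x₁ ≠ x₂ → ∀ g₁ ∈ F, ∀ g₂ ∈ F, corrupt g₁ x₁ ≠ corrupt g₂ x₂

/-- The code `C` corrects all error patterns in `F` in real-time with delay at most `d`. -/
def CorrectsRealTime {n : ℕ} (C : Finset (Word n)) (F : Set (Pattern n)) (d : ℕ) : Prop :=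
  ∀ z : ℕ, 1 ≤ z → z ≤ n - d → ∀ x₁ ∈ C, ∀ x₂ ∈ C, x₁ ≠ x₂ →
    ∀ g₁ ∈ F, ∀ g₂ ∈ F, corruptPrefix g₁ x₁ (z + d) ≠ corruptPrefix g₂ x₂ (z + d)

/-- The redundancy `R(C) = n - log₂ #C` of an `n`-length code `C`. -/
noncomputable def redundancy {n : ℕ} (C : Finset (Word n)) : ℝ :=
  (n : ℝ) - Real.logb 2 (C.card)

/-- The number of nonzero entries of `e` in the `l`-th block (`1 ≤ l ≤ L`) of the decomposition
of `{0,1}^n` into `L` blocks, where blocks `1, …, L-1` have length `3P` and the last block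
extends to position `n`. -/
def blockCount (n P L l : ℕ) (e : Fin n → Bool) : ℕ :=
  (Finset.univ.filter fun i : Fin n =>
    e i = true ∧ 3 * P * (l - 1) ≤ (i : ℕ) ∧ (l = L ∨ (i : ℕ) < 3 * P * l)).card

/-!
A pattern in `T(l)` has an error at some position `a` of block `l` (at most `3P` choices) and
at some `b` of block `l + 1` (at most `6P` choices, the last block being shorter than `6P`).
Switching the errors at `a` and `b` off is injective on patterns with errors there, so
`#T(l) ≤ 18 P² · #E_n(t - 2)`. Double counting pairs of positions against patterns gives
`C(n - t + 2, 2) · #E_n(t - 2) ≤ C(t, 2) · #E_n(t)`, and `t² ≤ n` makes `n² ≤ 4 C(n - t + 2, 2)`.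
-/

open Finset

section ErrorSets

variable {n : ℕ}

def errSet (g : Pattern n) : Finset (Fin n) := {i | g.1 i = true}

def withErrSet (g : Pattern n) (s : Finset (Fin n)) : Pattern n := (fun i => decide (i ∈ s), g.2)

@[simp] lemma mem_errSet {g : Pattern n} {i : Fin n} : i ∈ errSet g ↔ g.1 i = true := by
  simp [errSet]

@[simp] lemma errSet_withErrSet (g : Pattern n) (s : Finset (Fin n)) :
    errSet (withErrSet g s) = s := by
  ext i; simp [withErrSet]

@[simp] lemma withErrSet_withErrSet (g : Pattern n) (s s' : Finset (Fin n)) :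
    withErrSet (withErrSet g s) s' = withErrSet g s' := rfl

@[simp] lemma withErrSet_errSet (g : Pattern n) : withErrSet g (errSet g) = g := by
  ext i <;> simp [withErrSet]

lemma mem_Epat {r : ℕ} {g : Pattern n} : g ∈ Epat n r ↔ #(errSet g) ≤ r := by
  simp only [Epat, mem_filter, mem_univ, true_and]
  rfl

theorem card_filter_subset_errSet (s : Finset (Fin n)) (r : ℕ) :
    #{g ∈ Epat n (r + #s) | s ⊆ errSet g} = #{g ∈ Epat n r | Disjoint s (errSet g)} := by
  refine card_nbij' (fun g => withErrSet g (errSet g \ s)) (fun g => withErrSet g (errSet g ∪ s))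
    ?_ ?_ ?_ ?_
  · intro g hg
    simp only [mem_coe, mem_filter, mem_Epat] at hg ⊢
    rw [errSet_withErrSet, card_sdiff_of_subset hg.2]
    exact ⟨by omega, disjoint_sdiff⟩
  · intro g hg
    simp only [mem_coe, mem_filter, mem_Epat] at hg ⊢
    rw [errSet_withErrSet]
    exact ⟨(card_union_le _ _).trans (by omega), subset_union_right⟩
  · intro g hg
    simp only [mem_coe, mem_filter] at hg
    simp [sdiff_union_of_subset hg.2]
  · intro g hg
    simp only [mem_coe, mem_filter] at hg
    simp [union_sdiff_cancel_right hg.2.symm]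

theorem choose_two_mul_card_Epat_le (r : ℕ) :
    (n - r).choose 2 * #(Epat n r) ≤ (r + 2).choose 2 * #(Epat n (r + 2)) := by
  set pairs : Finset (Finset (Fin n)) := powersetCard 2 univ
  have pairs_filter (E : Finset (Fin n)) : {s ∈ pairs | s ⊆ E} = powersetCard 2 E := by
    ext s; simp [pairs, and_comm]
  have card_free_pairs (g : Pattern n) :
      #(pairs.bipartiteBelow (fun s g => Disjoint s (errSet g)) g) = (n - #(errSet g)).choose 2 := by
    simp only [bipartiteBelow, ← subset_compl_iff_disjoint_right, pairs_filter, card_powersetCard,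
      card_compl, Fintype.card_fin]
  have card_error_pairs (g : Pattern n) :
      #(pairs.bipartiteBelow (fun s g => s ⊆ errSet g) g) = (#(errSet g)).choose 2 := by
    rw [bipartiteBelow, pairs_filter, card_powersetCard]
  calc (n - r).choose 2 * #(Epat n r)
      ≤ ∑ g ∈ Epat n r, #(pairs.bipartiteBelow (fun s g => Disjoint s (errSet g)) g) := by
        rw [mul_comm, ← smul_eq_mul]
        refine card_nsmul_le_sum _ _ _ fun g hg => ?_
        rw [card_free_pairs g]
        exact Nat.choose_le_choose _ (by have := mem_Epat.1 hg; omega)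
    _ = ∑ s ∈ pairs, #{g ∈ Epat n r | Disjoint s (errSet g)} :=
        (sum_card_bipartiteAbove_eq_sum_card_bipartiteBelow _).symm
    _ = ∑ s ∈ pairs, #{g ∈ Epat n (r + 2) | s ⊆ errSet g} := by
        refine sum_congr rfl fun s hs => ?_
        rw [← card_filter_subset_errSet, (mem_powersetCard.1 hs).2]
    _ = ∑ g ∈ Epat n (r + 2), #(pairs.bipartiteBelow (fun s g => s ⊆ errSet g) g) :=
        sum_card_bipartiteAbove_eq_sum_card_bipartiteBelow _
    _ ≤ (r + 2).choose 2 * #(Epat n (r + 2)) := by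
        rw [mul_comm, ← smul_eq_mul]
        refine sum_le_card_nsmul _ _ _ fun g hg => ?_
        rw [card_error_pairs g]
        exact Nat.choose_le_choose _ (mem_Epat.1 hg)

theorem card_filter_meets_both_le {A B : Finset (Fin n)} (hAB : Disjoint A B) (r : ℕ) :
    #{g ∈ Epat n (r + 2) | (∃ a ∈ A, g.1 a = true) ∧ ∃ b ∈ B, g.1 b = true} ≤
      #A * #B * #(Epat n r) := by
  have hcover : {g ∈ Epat n (r + 2) | (∃ a ∈ A, g.1 a = true) ∧ ∃ b ∈ B, g.1 b = true} ⊆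
      A.biUnion fun a => B.biUnion fun b => {g ∈ Epat n (r + 2) | {a, b} ⊆ errSet g} := by
    intro g hg
    obtain ⟨hg, ⟨a, ha, hga⟩, ⟨b, hb, hgb⟩⟩ := mem_filter.1 hg
    simp only [mem_biUnion, mem_filter]
    exact ⟨a, ha, b, hb, hg, by simp [insert_subset_iff, hga, hgb]⟩
  refine (card_le_card hcover).trans <| (card_biUnion_le_card_mul _ _ _ fun a ha => ?_).trans_eq
    (mul_assoc _ _ _).symm
  refine card_biUnion_le_card_mul _ _ _ fun b hb => ?_
  have hpair : #{a, b} = 2 := card_pair fun hab => disjoint_left.1 hAB ha (hab ▸ hb)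
  have hbij := card_filter_subset_errSet {a, b} r
  rw [hpair] at hbij
  exact hbij.trans_le (card_filter_le _ _)

end ErrorSets

def block (n P L l : ℕ) : Finset (Fin n) :=
  {i | 3 * P * (l - 1) ≤ (i : ℕ) ∧ (l = L ∨ (i : ℕ) < 3 * P * l)}

lemma exists_mem_block_of_blockCount_pos {n P L l : ℕ} {e : Fin n → Bool}
    (h : 0 < blockCount n P L l e) : ∃ i ∈ block n P L l, e i = true := by
  obtain ⟨i, hi⟩ := card_pos.1 h
  simp only [mem_filter, mem_univ, true_and] at hi
  exact ⟨i, by simp [block, hi.2], hi.1⟩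

lemma card_le_of_forall_mem_Ico {n a b : ℕ} {s : Finset (Fin n)}
    (h : ∀ i ∈ s, a ≤ (i : ℕ) ∧ (i : ℕ) < b) : #s ≤ b - a := by
  rw [← Nat.card_Ico, ← card_map Fin.valEmbedding]
  exact card_le_card fun x hx => by
    obtain ⟨i, hi, rfl⟩ := mem_map.1 hx
    exact mem_Ico.2 (h i hi)

lemma card_block_le_three_mul {n P L l : ℕ} (hl : l ≠ L) : #(block n P L l) ≤ 3 * P := by
  refine (card_le_of_forall_mem_Ico fun i hi => ?_).trans (?_ : 3 * P * l - 3 * P * (l - 1) ≤ _)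
  · simp only [block, mem_filter, mem_univ, true_and] at hi
    exact ⟨hi.1, hi.2.resolve_left hl⟩
  · rw [← Nat.mul_sub]
    exact (Nat.mul_le_mul_left _ (by omega : l - (l - 1) ≤ 1)).trans_eq (mul_one _)

lemma card_block_le_six_mul {n P L l : ℕ} (hn : n < 3 * P * (L + 1)) :
    #(block n P L l) ≤ 6 * P := by
  refine (card_le_of_forall_mem_Ico fun i hi => ?_).trans
    (Nat.add_sub_cancel_left (n := 3 * P * (l - 1)) (m := 6 * P)).le
  simp only [block, mem_filter, mem_univ, true_and] at hi
  have hstep (k : ℕ) : 3 * P * (k + 1) ≤ 3 * P * (k - 1) + 6 * P :=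
    calc 3 * P * (k + 1) ≤ 3 * P * (k - 1 + 2) := Nat.mul_le_mul_left _ (by omega)
      _ = 3 * P * (k - 1) + 6 * P := by ring
  refine ⟨hi.1, ?_⟩
  rcases hi.2 with rfl | hi
  · exact i.isLt.trans (hn.trans_le (hstep l))
  · exact hi.trans_le ((Nat.mul_le_mul_left _ l.le_succ).trans (hstep l))

lemma disjoint_block_succ {n P L l : ℕ} (hl : l ≠ L) :
    Disjoint (block n P L l) (block n P L (l + 1)) := by
  simp only [block, disjoint_left, mem_filter, mem_univ, true_and, Nat.add_sub_cancel]
  omega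

lemma choose_two_mul_two (m : ℕ) : m.choose 2 * 2 = m * (m - 1) := by
  cases m with
  | zero => rfl
  | succ m => rw [← Nat.add_one_mul_choose_eq, Nat.choose_one_right, Nat.add_sub_cancel]

lemma sq_le_four_mul_choose_two_sub {n r : ℕ} (h : (r + 2) ^ 2 ≤ n) :
    n ^ 2 ≤ 4 * (n - r).choose 2 := by
  have hrn : r + 2 ≤ n := (Nat.le_self_pow two_ne_zero _).trans h
  obtain ⟨A, rfl⟩ : ∃ A, n = A + r + 2 := ⟨n - r - 2, by omega⟩
  rw [show 4 * (A + r + 2 - r).choose 2 = 2 * ((A + r + 2 - r).choose 2 * 2) by ring,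
    choose_two_mul_two, show A + r + 2 - r = A + 2 by omega, show A + 2 - 1 = A + 1 by omega]
  nlinarith

lemma ncard_blockCount_eq_one_le {n P L l r : ℕ} (hl : l ≠ L) (hn : n < 3 * P * (L + 1)) :
    ({g : Pattern n | g ∈ Epat n (r + 2) ∧ blockCount n P L l g.1 = 1 ∧
        blockCount n P L (l + 1) g.1 = 1}).ncard ≤ 3 * P * (6 * P) * #(Epat n r) := by
  refine (Set.ncard_le_ncard (t := ↑{g ∈ Epat n (r + 2) | (∃ a ∈ block n P L l, g.1 a = true) ∧
    ∃ b ∈ block n P L (l + 1), g.1 b = true}) ?_ (finite_toSet _)).trans ?_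
  · rintro g ⟨hg, h1, h2⟩
    simp only [coe_filter]
    exact ⟨hg, exists_mem_block_of_blockCount_pos (by omega),
      exists_mem_block_of_blockCount_pos (by omega)⟩
  · rw [Set.ncard_coe_finset]
    refine (card_filter_meets_both_le (disjoint_block_succ hl) r).trans ?_
    gcongr
    exacts [card_block_le_three_mul hl, card_block_le_six_mul hn]

theorem stmt14_general (n t P : ℕ) (ht : 2 ≤ t) (htn : (t : ℝ) ≤ Real.sqrt n)
    (l : ℕ) (hl1 : 1 ≤ l) (hl2 : l ≤ n / (3 * P) - 1) :
    (({g : Pattern n | g ∈ Epat n t ∧ blockCount n P (n / (3 * P)) l g.1 = 1 ∧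
        blockCount n P (n / (3 * P)) (l + 1) g.1 = 1}).ncard : ℝ) ≤
      (36 * (P : ℝ) ^ 2 * t ^ 2 / n ^ 2) * ((Epat n t).card : ℝ) := by
  have hP : 0 < 3 * P := Nat.pos_of_ne_zero fun h => by simp [h] at hl2; omega
  have htn' : t ^ 2 ≤ n := by exact_mod_cast (Real.le_sqrt (by positivity) (by positivity)).1 htn
  obtain ⟨r, rfl⟩ : ∃ r, t = r + 2 := ⟨t - 2, by omega⟩
  have hT := ncard_blockCount_eq_one_le (r := r) (show l ≠ n / (3 * P) by omega)
    (Nat.lt_mul_div_succ n hP)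
  have hchoose : (r + 2).choose 2 * 2 ≤ (r + 2) ^ 2 := by
    rw [choose_two_mul_two, sq]
    exact Nat.mul_le_mul_left _ (Nat.sub_le _ _)
  have key := calc
    _ * n ^ 2 ≤ 3 * P * (6 * P) * #(Epat n r) * (4 * (n - r).choose 2) :=
        Nat.mul_le_mul hT (sq_le_four_mul_choose_two_sub htn')
    _ = 36 * P ^ 2 * ((n - r).choose 2 * #(Epat n r)) * 2 := by ring
    _ ≤ 36 * P ^ 2 * ((r + 2).choose 2 * #(Epat n (r + 2))) * 2 := by
        gcongr 36 * P ^ 2 * ?_ * 2; exact choose_two_mul_card_Epat_le r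
    _ = 36 * P ^ 2 * ((r + 2).choose 2 * 2) * #(Epat n (r + 2)) := by ring
    _ ≤ 36 * P ^ 2 * (r + 2) ^ 2 * #(Epat n (r + 2)) := by gcongr
  have hn : 0 < n := lt_of_lt_of_le (by positivity) htn'
  rw [div_mul_eq_mul_div, le_div_iff₀ (by positivity)]
  exact_mod_cast key

/-- Bound on the number of patterns whose blocks `l` and `l+1` each contain exactly one
error. -/
theorem stmt14 (n t P : ℕ) (hn : 4 ≤ n) (ht : 2 ≤ t) (htn : (t : ℝ) ≤ Real.sqrt n)
    (hP : 0 < P) (h6P : 6 * P ≤ n)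
    (l : ℕ) (hl1 : 1 ≤ l) (hl2 : l ≤ n / (3 * P) - 1) :
    (({g : Pattern n | g ∈ Epat n t ∧ blockCount n P (n / (3 * P)) l g.1 = 1 ∧
        blockCount n P (n / (3 * P)) (l + 1) g.1 = 1}).ncard : ℝ) ≤
      (36 * (P : ℝ) ^ 2 * t ^ 2 / n ^ 2) * ((Epat n t).card : ℝ) :=
  stmt14_general n t P ht htn l hl1 hl2
end

section
/- Let n, t, P be positive integers with 2 ≤ t ≤ √n, n ≥ 4 and 6P ≤ n. Then the number of patterns (e,v) ∈ E_n(t) for which two consecutive blocks of e (among the L = ⌊n/(3P)⌋ blocks) each contain exactly one nonzero entry is at most (12·P·t²/n)·#E_n(t). -/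
/-!
Such a pattern has errors at some `i` and `j`, where `j` lies in the window of `6 * P` positions
following the block of `i` (even the last block is shorter than `6 * P`). Clearing both errors
is injective on the patterns with errors at `i` and `j`, so a union bound over the at most
`n * 6P` such pairs gives at most `n * 6P * #E_n(t - 2)` patterns. Termwise,
`C(n, k) (n - k) (n - k - 1) = C(n, k + 2) (k + 2) (k + 1)` gives
`#E_n(t - 2) (n + 1 - t)² ≤ t² #E_n(t)`, and `t² ≤ n` gives `n² ≤ 2 (n + 1 - t)²`.
-/
open Finset

theorem card_filter_card_eq_choose (α : Type*) [Fintype α] [DecidableEq α] (k : ℕ) :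
    #{e : α → Bool | #{i | e i = true} = k} = (Fintype.card α).choose k := by
  rw [← card_univ, ← card_powersetCard]
  refine card_nbij' (fun e => ({i | e i = true} : Finset α)) (fun s i => decide (i ∈ s))
    (fun e he => by simpa using he) (fun s hs => by simpa using hs)
    (fun e _ => funext fun i => by simp) (fun s _ => ext fun i => by simp)

theorem card_filter_card_le_eq_sum_choose (α : Type*) [Fintype α] [DecidableEq α] (r : ℕ) :
    #{e : α → Bool | #{i | e i = true} ≤ r} =
      ∑ k ∈ range (r + 1), (Fintype.card α).choose k := by
  rw [card_eq_sum_card_fiberwise (f := fun e => #{i | e i = true}) (t := range (r + 1))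
    (fun e he => by simpa [Nat.lt_succ_iff] using he)]
  refine sum_congr rfl fun k hk => ?_
  rw [filter_filter, ← card_filter_card_eq_choose]
  congr 1
  ext e
  simp only [mem_filter, mem_univ, true_and, and_iff_right_iff_imp]
  rintro rfl
  exact Nat.lt_succ_iff.mp (mem_range.mp hk)

theorem card_epat (n r : ℕ) : #(Epat n r) = (∑ k ∈ range (r + 1), n.choose k) * 3 ^ n := by
  have hprod :
      Epat n r = ({e : Fin n → Bool | #{i | e i = true} ≤ r} : Finset _) ×ˢ univ := by
    rw [← filter_product_left, univ_product_univ]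
    rfl
  rw [hprod, card_product, card_filter_card_le_eq_sum_choose, card_univ, Fintype.card_fun,
    Fintype.card_fin]
  rfl

theorem choose_mul_sq_le_choose_add_two_mul_sq {n k t : ℕ} (hk : k + 2 ≤ t) (ht : t ≤ n) :
    n.choose k * (n + 1 - t) ^ 2 ≤ n.choose (k + 2) * t ^ 2 := by
  have hchoose : n.choose (k + 2) * ((k + 2) * (k + 1)) = n.choose k * ((n - k) * (n - k - 1)) := by
    have h₁ := Nat.choose_succ_right_eq n k
    have h₂ : n.choose (k + 2) * (k + 2) = n.choose (k + 1) * (n - k - 1) := by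
      rw [Nat.choose_succ_right_eq n (k + 1), Nat.sub_succ']
    calc n.choose (k + 2) * ((k + 2) * (k + 1)) = n.choose (k + 2) * (k + 2) * (k + 1) := by ring
      _ = n.choose (k + 1) * (k + 1) * (n - k - 1) := by rw [h₂]; ring
      _ = _ := by rw [h₁]; ring
  calc n.choose k * (n + 1 - t) ^ 2 ≤ n.choose k * ((n - k) * (n - k - 1)) := by
        rw [sq]; exact Nat.mul_le_mul_left _ (Nat.mul_le_mul (by omega) (by omega))
    _ = n.choose (k + 2) * ((k + 2) * (k + 1)) := hchoose.symm
    _ ≤ n.choose (k + 2) * t ^ 2 := by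
        rw [sq]; exact Nat.mul_le_mul_left _ (Nat.mul_le_mul (by omega) (by omega))

theorem card_epat_sub_two_mul_le {n t : ℕ} (ht : 2 ≤ t) (htn : t ≤ n) :
    #(Epat n (t - 2)) * (n + 1 - t) ^ 2 ≤ #(Epat n t) * t ^ 2 := by
  obtain ⟨m, rfl⟩ := Nat.exists_eq_add_of_le' ht
  rw [card_epat, card_epat, Nat.add_sub_cancel, mul_right_comm, mul_right_comm _ (3 ^ n)]
  refine Nat.mul_le_mul_right _ ?_
  calc (∑ k ∈ range (m + 1), n.choose k) * (n + 1 - (m + 2)) ^ 2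
      ≤ ∑ k ∈ range (m + 1), n.choose (k + 2) * (m + 2) ^ 2 := by
        rw [sum_mul]
        exact sum_le_sum fun k hk =>
          choose_mul_sq_le_choose_add_two_mul_sq (by have := mem_range.mp hk; omega) htn
    _ ≤ (∑ k ∈ range (m + 2 + 1), n.choose k) * (m + 2) ^ 2 := by
        rw [← sum_mul, sum_range_succ' _ (m + 2), sum_range_succ' _ (m + 1)]
        gcongr
        exact le_add_right (le_add_right le_rfl)

theorem sq_le_two_mul_sq_add_one_sub {n t : ℕ} (h : t ^ 2 ≤ n) :
    n ^ 2 ≤ 2 * (n + 1 - t) ^ 2 := by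
  have ht : t ≤ n := (Nat.le_self_pow two_ne_zero t).trans h
  zify [ht.trans n.le_succ] at h ⊢
  -- `2 (n + 1 - t)² - n² = (n - t²)(n + (t - 2)²) + (t - 1)⁴ + 1`
  nlinarith [mul_nonneg (sub_nonneg.mpr h)
      (add_nonneg (Int.natCast_nonneg n) (sq_nonneg ((t : ℤ) - 2))),
    pow_two_nonneg (((t : ℤ) - 1) ^ 2)]

section

variable {n : ℕ}

def nextTwoBlocks (P : ℕ) (i : Fin n) : Finset (Fin n) :=
  {j | (j : ℕ) ∈ Ico (3 * P * (i / (3 * P) + 1)) (3 * P * (i / (3 * P) + 1) + 6 * P)}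

theorem card_nextTwoBlocks_le (P : ℕ) (i : Fin n) : #(nextTwoBlocks P i) ≤ 6 * P := by
  calc #(nextTwoBlocks P i)
      ≤ #(Ico (3 * P * (i / (3 * P) + 1)) (3 * P * (i / (3 * P) + 1) + 6 * P)) :=
        card_le_card_of_injOn Fin.val (fun j hj => by simpa [nextTwoBlocks] using hj)
          Fin.val_injective.injOn
    _ = 6 * P := by simp

theorem lt_of_mem_nextTwoBlocks {P : ℕ} {i j : Fin n} (hj : j ∈ nextTwoBlocks P i) : i < j := by
  simp only [nextTwoBlocks, mem_filter, mem_univ, true_and, mem_Ico] at hj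
  rcases Nat.eq_zero_or_pos P with rfl | hP
  · omega
  · exact Fin.lt_def.mpr ((Nat.lt_mul_div_succ _ (by omega)).trans_le hj.1)

def erasePair (i j : Fin n) (g : Pattern n) : Pattern n :=
  (fun p => if p = i ∨ p = j then false else g.1 p, g.2)

theorem errCount_erasePair {i j : Fin n} (hij : i ≠ j) {g : Pattern n} (hi : g.1 i = true)
    (hj : g.1 j = true) : errCount (erasePair i j g) = errCount g - 2 := by
  have hsupport : (univ.filter fun p => (erasePair i j g).1 p = true) =
      (univ.filter fun p => g.1 p = true) \ {i, j} := by
    ext p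
    simp only [erasePair, Bool.if_false_left, Bool.decide_or, Bool.not_or, Bool.and_eq_true,
      Bool.not_eq_eq_eq_not, Bool.not_true, decide_eq_false_iff_not, mem_filter, mem_univ,
      true_and, mem_sdiff, mem_insert, mem_singleton, not_or]
    tauto
  have hsub : ({i, j} : Finset (Fin n)) ⊆ univ.filter fun p => g.1 p = true := by
    simp [insert_subset_iff, hi, hj]
  rw [errCount, hsupport, card_sdiff_of_subset hsub, card_pair hij, errCount]

theorem erasePair_injOn (i j : Fin n) :
    Set.InjOn (erasePair i j) {g | g.1 i = true ∧ g.1 j = true} := by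
  intro g hg g' hg' heq
  simp only [erasePair, Prod.mk.injEq] at heq
  refine Prod.ext (funext fun p => ?_) heq.2
  by_cases hp : p = i ∨ p = j
  · rcases hp with rfl | rfl
    exacts [hg.1.trans hg'.1.symm, hg.2.trans hg'.2.symm]
  · simpa [hp] using congrFun heq.1 p

theorem card_filter_epat_both_le {t : ℕ} {i j : Fin n} (hij : i ≠ j) :
    #{g ∈ Epat n t | g.1 i = true ∧ g.1 j = true} ≤ #(Epat n (t - 2)) := by
  refine card_le_card_of_injOn (erasePair i j) (fun g hg => ?_)
    ((erasePair_injOn i j).mono fun g hg => (mem_filter.mp hg).2)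
  obtain ⟨hg, hi, hj⟩ := mem_filter.mp hg
  simp only [Epat, mem_filter, mem_univ, true_and, coe_filter, Set.mem_ofPred_eq] at hg ⊢
  rw [errCount_erasePair hij hi hj]
  omega

theorem exists_mem_nextTwoBlocks {n P l : ℕ} {e : Fin n → Bool} (hl : 1 ≤ l)
    (hlL : l ≤ n / (3 * P) - 1) (h₁ : blockCount n P (n / (3 * P)) l e = 1)
    (h₂ : blockCount n P (n / (3 * P)) (l + 1) e = 1) :
    ∃ i j, e i = true ∧ e j = true ∧ j ∈ nextTwoBlocks P i := by
  have h3P : 0 < 3 * P := Nat.pos_of_ne_zero fun h => by simp [h] at hlL; omega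
  obtain ⟨i, hi⟩ := card_pos.mp (show 0 < blockCount n P (n / (3 * P)) l e by omega)
  obtain ⟨j, hj⟩ := card_pos.mp (show 0 < blockCount n P (n / (3 * P)) (l + 1) e by omega)
  simp only [mem_filter, mem_univ, true_and] at hi hj
  obtain ⟨hei, hi_lo, hi_hi⟩ := hi
  obtain ⟨hej, hj_lo, hj_hi⟩ := hj
  have hi_lt : (i : ℕ) < 3 * P * l := hi_hi.resolve_left (by omega)
  have hblock : (i : ℕ) / (3 * P) = l - 1 :=
    Nat.div_eq_of_lt_le (by rw [mul_comm]; exact hi_lo)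
      (by rw [mul_comm]; convert hi_lt using 2; omega)
  refine ⟨i, j, hei, hej, ?_⟩
  simp only [nextTwoBlocks, mem_filter, mem_univ, true_and, mem_Ico, hblock,
    Nat.sub_add_cancel hl]
  have hjn : (j : ℕ) < 3 * P * (n / (3 * P) + 1) := j.isLt.trans (Nat.lt_mul_div_succ n h3P)
  refine ⟨by simpa using hj_lo, ?_⟩
  rcases hj_hi with hlast | hj_hi
  · rw [← hlast] at hjn
    linarith [show 3 * P * (l + 1 + 1) = 3 * P * l + 6 * P by ring]
  · linarith [show 3 * P * (l + 1) = 3 * P * l + 3 * P by ring]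

theorem ncard_consecutive_single_blocks_le (n t P : ℕ) :
    ({g : Pattern n | g ∈ Epat n t ∧
        ∃ l : ℕ, 1 ≤ l ∧ l ≤ n / (3 * P) - 1 ∧
          blockCount n P (n / (3 * P)) l g.1 = 1 ∧
          blockCount n P (n / (3 * P)) (l + 1) g.1 = 1}).ncard ≤
      n * (6 * P) * #(Epat n (t - 2)) := by
  calc _ ≤ #(univ.biUnion fun i => (nextTwoBlocks P i).biUnion fun j =>
          {g ∈ Epat n t | g.1 i = true ∧ g.1 j = true}) := by
        rw [← Set.ncard_coe_finset]
        refine Set.ncard_le_ncard fun g ⟨hg, l, hl, hlL, h₁, h₂⟩ => ?_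
        obtain ⟨i, j, hi, hj, hij⟩ := exists_mem_nextTwoBlocks hl hlL h₁ h₂
        simp only [coe_biUnion, coe_filter, Set.mem_iUnion]
        exact ⟨i, mem_coe.mpr (mem_univ i), j, hij, hg, hi, hj⟩
    _ ≤ ∑ i : Fin n, ∑ j ∈ nextTwoBlocks P i, #(Epat n (t - 2)) :=
        card_biUnion_le.trans <| sum_le_sum fun i _ => card_biUnion_le.trans <|
          sum_le_sum fun j hj => card_filter_epat_both_le (lt_of_mem_nextTwoBlocks hj).ne
    _ ≤ n * (6 * P) * #(Epat n (t - 2)) := by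
        simp only [sum_const, smul_eq_mul]
        refine (sum_le_card_nsmul _ _ _ fun i _ =>
          Nat.mul_le_mul_right _ (card_nextTwoBlocks_le P i)).trans_eq ?_
        simp [mul_assoc]

end

theorem stmt15_general (n t P : ℕ) (ht : 2 ≤ t) (htn : (t : ℝ) ≤ Real.sqrt n) :
    (({g : Pattern n | g ∈ Epat n t ∧
        ∃ l : ℕ, 1 ≤ l ∧ l ≤ n / (3 * P) - 1 ∧
          blockCount n P (n / (3 * P)) l g.1 = 1 ∧
          blockCount n P (n / (3 * P)) (l + 1) g.1 = 1}).ncard : ℝ) ≤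
      (12 * (P : ℝ) * t ^ 2 / n) * ((Epat n t).card : ℝ) := by
  have hsq : t ^ 2 ≤ n := by exact_mod_cast (Real.le_sqrt (by positivity) (by positivity)).mp htn
  have ht_le : t ≤ n := (Nat.le_self_pow two_ne_zero t).trans hsq
  have hcount := ncard_consecutive_single_blocks_le n t P
  rw [div_mul_eq_mul_div, le_div_iff₀ (by exact_mod_cast (by omega : 0 < n))]
  exact_mod_cast calc
    _ ≤ n * (6 * P) * #(Epat n (t - 2)) * n := Nat.mul_le_mul_right n hcount
    _ = 6 * P * (n ^ 2 * #(Epat n (t - 2))) := by ring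
    _ ≤ 6 * P * (2 * (n + 1 - t) ^ 2 * #(Epat n (t - 2))) := by
        gcongr; exact sq_le_two_mul_sq_add_one_sub hsq
    _ = 12 * P * (#(Epat n (t - 2)) * (n + 1 - t) ^ 2) := by ring
    _ ≤ 12 * P * (#(Epat n t) * t ^ 2) :=
        Nat.mul_le_mul_left _ (card_epat_sub_two_mul_le ht ht_le)
    _ = 12 * P * t ^ 2 * #(Epat n t) := by ring

/-- Bound on the number of patterns for which two consecutive blocks each contain exactly
one error. -/
theorem stmt15 (n t P : ℕ) (hn : 4 ≤ n) (ht : 2 ≤ t) (htn : (t : ℝ) ≤ Real.sqrt n)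
    (hP : 0 < P) (h6P : 6 * P ≤ n) :
    (({g : Pattern n | g ∈ Epat n t ∧
        ∃ l : ℕ, 1 ≤ l ∧ l ≤ n / (3 * P) - 1 ∧
          blockCount n P (n / (3 * P)) l g.1 = 1 ∧
          blockCount n P (n / (3 * P)) (l + 1) g.1 = 1}).ncard : ℝ) ≤
      (12 * (P : ℝ) * t ^ 2 / n) * ((Epat n t).card : ℝ) :=
  stmt15_general n t P ht htn
end
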